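/- arXiv:2312.06513 — 2 statements merged into one kernel-verified Lean document; each statement's English description precedes it below -/
import Mathlib

section
/- Let n ≥ 1 and suppose that for each pair 1 ≤ i < j ≤ n we are given m_{ij} ∈ ℝ ∪ {−∞} and M_{ij} ∈ ℝ ∪ {+∞} with m_{ij} < M_{ij}. Then the set of points x ∈ ℝⁿ with x₁ + ⋯ + x_n = 0 satisfying m_{ij} < x_i − x_j < M_{ij} for all 1 ≤ i < j ≤ n is nonempty and bounded if and only if the associated weighted digraph is m-acyclic and strongly connected (every vertex can be reached from every other vertex along directed edges of the digraph). -/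
/-!
A point of the polytope is a strict potential `x` of the weighted digraph (`w u v < x u - x v`
on every edge) normalised to coordinate sum zero. Along a cycle these differences telescope to
zero, so a potential forces every cycle to be negative. Conversely, if every simple cycle is
negative, then so it stays after adding a small `ε` to every weight, and the maximal weight of a
simple path starting at `v` is then a strict potential.

If `v` is not reachable from `u`, no edge leaves the set of vertices reachable from `u`, so
raising all the other vertices together keeps a feasible point feasible and yields an unbounded
ray. If the digraph is strongly connected, chaining edge constraints bounds every difference
`x a - x b` from below, and a zero-sum vector is then bounded.
-/

/-- Cyclically consecutive pairs along a list of vertices. -/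
def cpairs {n : ℕ} (c : List (Fin n)) : List (Fin n × Fin n) := c.zip (c.rotate 1)

/-- `c` is a directed cycle of the weighted digraph with (extended-real) weight
function `w`, an edge `u → v` being present when `w u v ≠ ⊥`. -/
def IsCycleE {n : ℕ} (w : Fin n → Fin n → EReal) (c : List (Fin n)) : Prop :=
  2 ≤ c.length ∧ c.Nodup ∧ ∀ p ∈ cpairs c, w p.1 p.2 ≠ ⊥

/-- Total weight of the edges of a cycle. -/
noncomputable def cycWeightE {n : ℕ} (w : Fin n → Fin n → EReal) (c : List (Fin n)) : EReal :=
  ((cpairs c).map fun p => w p.1 p.2).sum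

/-- A weighted digraph is `m`-acyclic if it has no directed cycle of
nonnegative total weight. -/
def MAcyclicE {n : ℕ} (w : Fin n → Fin n → EReal) : Prop :=
  ∀ c : List (Fin n), IsCycleE w c → ¬ (0 ≤ cycWeightE w c)

/-- The weighted digraph associated to the system `m i j < x i - x j < M i j`
(`i < j`): an edge `i → j` of weight `m i j` when `m i j ≠ -∞`, and an edge
`j → i` of weight `-(M i j)` when `M i j ≠ +∞`. -/
noncomputable def assocW {n : ℕ} (m M : Fin n → Fin n → EReal) (u v : Fin n) : EReal :=
  if u < v then m u v else -(M v u)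

open Filter Topology

section Paths

variable {ι : Type*}

def pathPairs (l : List ι) : List (ι × ι) := l.zip l.tail

def cyclePairs (c : List ι) : List (ι × ι) := c.zip (c.rotate 1)

def edgeSum {A : Type*} [AddMonoid A] (r : ι → ι → A) (ps : List (ι × ι)) : A :=
  (ps.map fun p => r p.1 p.2).sum

@[simp]
lemma pathPairs_singleton (a : ι) : pathPairs [a] = [] := rfl

@[simp]
lemma pathPairs_cons_cons (a b : ι) (l : List ι) :
    pathPairs (a :: b :: l) = (a, b) :: pathPairs (b :: l) := rfl

lemma pathPairs_append_cons (l₁ : List ι) (a : ι) (l₂ : List ι) :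
    pathPairs (l₁ ++ a :: l₂) = pathPairs (l₁ ++ [a]) ++ pathPairs (a :: l₂) := by
  induction l₁ with
  | nil => rfl
  | cons b l₁ ih =>
    cases l₁ with
    | nil => rfl
    | cons c l₁ =>
      simp only [List.cons_append, pathPairs_cons_cons] at ih ⊢
      rw [ih]

lemma cyclePairs_cons (a : ι) (l : List ι) : cyclePairs (a :: l) = pathPairs (a :: l ++ [a]) := by
  have hzip : (a :: l ++ [a]).zip ((l ++ [a]) ++ []) = (a :: l).zip (l ++ [a]) ++ [a].zip [] :=
    List.zip_append (by simp)
  simp only [List.append_nil, List.zip_nil_right, List.cons_append] at hzip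
  rw [cyclePairs, pathPairs, List.rotate_cons_succ, List.rotate_zero, List.cons_append,
    List.tail_cons, hzip]

lemma cyclePairs_cons_append_singleton (a b : ι) (l : List ι) :
    cyclePairs ((a :: l) ++ [b]) = pathPairs ((a :: l) ++ [b]) ++ [(b, a)] := by
  rw [List.cons_append, cyclePairs_cons, ← List.cons_append, List.append_assoc,
    List.singleton_append, pathPairs_append_cons]
  rfl

@[simp]
lemma length_cyclePairs (c : List ι) : (cyclePairs c).length = c.length := by
  simp [cyclePairs]

lemma List.Nodup.fst_ne_snd_of_mem_pathPairs {l : List ι} (hl : l.Nodup) {p : ι × ι}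
    (hp : p ∈ pathPairs l) : p.1 ≠ p.2 := by
  induction l with
  | nil => simp [pathPairs] at hp
  | cons a t ih =>
    cases t with
    | nil => simp at hp
    | cons b t =>
      rw [pathPairs_cons_cons, List.mem_cons] at hp
      rcases hp with rfl | hp
      · exact fun hab => (List.nodup_cons.1 hl).1 (by simp [show a = b from hab])
      · exact ih hl.of_cons hp

lemma List.Nodup.fst_ne_snd_of_mem_cyclePairs {c : List ι} (hc : c.Nodup) (h2 : 2 ≤ c.length)
    {p : ι × ι} (hp : p ∈ cyclePairs c) : p.1 ≠ p.2 := by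
  obtain ⟨a, l, rfl⟩ := List.exists_cons_of_length_pos (by omega : 0 < c.length)
  obtain rfl | ⟨l, b, rfl⟩ := l.eq_nil_or_concat'
  · simp at h2
  rw [cyclePairs_cons, show a :: (l ++ [b]) ++ [a] = (a :: l) ++ b :: [a] by simp,
    pathPairs_append_cons, List.mem_append] at hp
  rcases hp with hp | hp
  · exact hc.fst_ne_snd_of_mem_pathPairs hp
  · simp only [pathPairs_cons_cons, pathPairs_singleton, List.mem_singleton] at hp
    subst hp
    exact fun hba => (List.nodup_cons.1 hc).1 (by simp [show b = a from hba])

@[simp]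
lemma edgeSum_nil {A : Type*} [AddMonoid A] (r : ι → ι → A) : edgeSum r [] = 0 := rfl

@[simp]
lemma edgeSum_cons {A : Type*} [AddMonoid A] (r : ι → ι → A) (p : ι × ι) (ps : List (ι × ι)) :
    edgeSum r (p :: ps) = r p.1 p.2 + edgeSum r ps := by
  simp [edgeSum]

@[simp]
lemma edgeSum_append {A : Type*} [AddMonoid A] (r : ι → ι → A) (ps qs : List (ι × ι)) :
    edgeSum r (ps ++ qs) = edgeSum r ps + edgeSum r qs := by
  simp [edgeSum]

lemma edgeSum_add_const (r : ι → ι → ℝ) (ε : ℝ) (ps : List (ι × ι)) :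
    edgeSum (fun u v => r u v + ε) ps = edgeSum r ps + ps.length * ε := by
  induction ps with
  | nil => simp
  | cons p ps ih => simp only [edgeSum_cons, ih, List.length_cons]; push_cast; ring

lemma edgeSum_sub_cyclePairs (x : ι → ℝ) (c : List ι) :
    edgeSum (fun u v => x u - x v) (cyclePairs c) = 0 := by
  have hsum :=
    List.sum_map_add (l := cyclePairs c) (f := fun p => x p.1 - x p.2) (g := fun p => x p.2)
  simp only [sub_add_cancel] at hsum
  have hfst : ((cyclePairs c).map fun p => x p.1) = c.map x := by
    rw [show (fun p : ι × ι => x p.1) = x ∘ Prod.fst from rfl, ← List.map_map, cyclePairs,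
      List.map_fst_zip (by simp)]
  have hsnd : ((cyclePairs c).map fun p => x p.2) = (c.rotate 1).map x := by
    rw [show (fun p : ι × ι => x p.2) = x ∘ Prod.snd from rfl, ← List.map_map, cyclePairs,
      List.map_snd_zip (by simp)]
  rw [hfst, hsnd, ((c.rotate_perm 1).map x).sum_eq] at hsum
  rw [edgeSum]
  linarith

def IsSimplePath (E : ι → ι → Prop) (l : List ι) : Prop :=
  l.Nodup ∧ ∀ p ∈ pathPairs l, E p.1 p.2

def IsSimpleCycle (E : ι → ι → Prop) (c : List ι) : Prop :=
  2 ≤ c.length ∧ c.Nodup ∧ ∀ p ∈ cyclePairs c, E p.1 p.2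

end Paths

section Potential

variable {ι : Type*} [Fintype ι] (E : ι → ι → Prop) (r : ι → ι → ℝ)

theorem exists_potential_of_cycle_nonpos
    (H : ∀ c, IsSimpleCycle E c → edgeSum r (cyclePairs c) ≤ 0) :
    ∃ x : ι → ℝ, ∀ u v, u ≠ v → E u v → r u v ≤ x u - x v := by
  have hmax : ∀ v, ∃ l ∈ {l | IsSimplePath E (v :: l)}, ∀ l' ∈ {l | IsSimplePath E (v :: l)},
      edgeSum r (pathPairs (v :: l')) ≤ edgeSum r (pathPairs (v :: l)) := fun v =>
    Set.exists_max_image _ _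
      ((List.finite_length_le ι (Fintype.card ι)).subset fun l hl =>
        (Nat.le_succ _).trans hl.1.length_le_card)
      ⟨[], by simp [IsSimplePath]⟩
  choose L hL hLmax using hmax
  refine ⟨fun v => edgeSum r (pathPairs (v :: L v)), fun u v huv he => ?_⟩
  by_cases hu : u ∈ L v
  -- the part of the best path from `v` up to `u`, closed by the edge `u → v`, is a simple cycle
  · obtain ⟨l₁, l₂, hsplit⟩ := List.append_of_mem hu
    have hsplit' : v :: L v = (v :: l₁) ++ u :: l₂ := by rw [hsplit, List.cons_append]
    obtain ⟨hnd, hE⟩ := hL v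
    rw [hsplit', pathPairs_append_cons] at hE
    rw [hsplit'] at hnd
    have hcycPairs := cyclePairs_cons_append_singleton v u l₁
    have hcyc : IsSimpleCycle E ((v :: l₁) ++ [u]) := by
      refine ⟨by simp, hnd.sublist ((List.singleton_sublist.2 List.mem_cons_self).append_left _),
        fun p hp => ?_⟩
      rw [hcycPairs, List.mem_append, List.mem_singleton] at hp
      rcases hp with hp | rfl
      · exact hE p (List.mem_append_left _ hp)
      · exact he
    have hsuffix : IsSimplePath E (u :: l₂) :=
      ⟨hnd.sublist (List.sublist_append_right _ _), fun p hp => hE p (List.mem_append_right _ hp)⟩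
    have hcycle_nonpos := H _ hcyc
    have hsuffix_le := hLmax u l₂ hsuffix
    rw [hcycPairs, edgeSum_append, edgeSum_cons, edgeSum_nil] at hcycle_nonpos
    show r u v ≤ edgeSum r (pathPairs (u :: L u)) - edgeSum r (pathPairs (v :: L v))
    rw [hsplit', pathPairs_append_cons, edgeSum_append]
    linarith
  · have hpath : IsSimplePath E (u :: v :: L v) := by
      refine ⟨List.nodup_cons.2 ⟨?_, (hL v).1⟩, ?_⟩
      · simpa [huv] using hu
      · simpa [he] using (hL v).2
    have := hLmax u (v :: L v) hpath
    simp only [pathPairs_cons_cons, edgeSum_cons] at this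
    linarith

theorem exists_potential_of_cycle_neg
    (H : ∀ c, IsSimpleCycle E c → edgeSum r (cyclePairs c) < 0) :
    ∃ x : ι → ℝ, ∀ u v, u ≠ v → E u v → r u v < x u - x v := by
  obtain ⟨ε, hε_margin, hε⟩ : ∃ ε : ℝ,
      (∀ c ∈ {c | IsSimpleCycle E c}, edgeSum r (cyclePairs c) + c.length * ε < 0) ∧ 0 < ε := by
    have hfin : {c | IsSimpleCycle E c}.Finite :=
      (List.finite_length_le ι (Fintype.card ι)).subset fun c hc => hc.2.1.length_le_card
    have hnear : ∀ᶠ ε in 𝓝 (0 : ℝ),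
        ∀ c ∈ {c | IsSimpleCycle E c}, edgeSum r (cyclePairs c) + c.length * ε < 0 :=
      hfin.eventually_all.2 fun c hc =>
        Tendsto.eventually_lt_const (by simpa using H c hc) (by fun_prop : Continuous fun ε : ℝ =>
          edgeSum r (cyclePairs c) + c.length * ε).continuousAt
    exact ((hnear.filter_mono nhdsWithin_le_nhds).and
      (self_mem_nhdsWithin (s := Set.Ioi 0))).exists
  obtain ⟨x, hx⟩ := exists_potential_of_cycle_nonpos E (fun u v => r u v + ε) fun c hc => by
    rw [edgeSum_add_const, length_cyclePairs]
    exact (hε_margin c hc).le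
  exact ⟨x, fun u v huv he => by linarith [hx u v huv he]⟩

end Potential

lemma list_sum_map_lt_coe_sum {α : Type*} {l : List α} (hl : l ≠ []) {f : α → EReal}
    {g : α → ℝ} (h : ∀ a ∈ l, f a < g a) : (l.map f).sum < ((l.map g).sum : ℝ) := by
  induction l with
  | nil => exact absurd rfl hl
  | cons a l ih =>
    rcases eq_or_ne l [] with rfl | hl'
    · simpa using h a List.mem_cons_self
    · rw [List.map_cons, List.map_cons, List.sum_cons, List.sum_cons, EReal.coe_add]
      exact EReal.add_lt_add (h a List.mem_cons_self)
        (ih hl' fun b hb => h b (List.mem_cons_of_mem a hb))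

lemma list_sum_map_eq_coe_sum {α : Type*} {l : List α} {f : α → EReal}
    (h : ∀ a ∈ l, f a ≠ ⊤ ∧ f a ≠ ⊥) : (l.map f).sum = ((l.map fun a => (f a).toReal).sum : ℝ) := by
  induction l with
  | nil => simp
  | cons a l ih =>
    rw [List.map_cons, List.map_cons, List.sum_cons, List.sum_cons, EReal.coe_add,
      ih fun b hb => h b (List.mem_cons_of_mem a hb),
      EReal.coe_toReal (h a List.mem_cons_self).1 (h a List.mem_cons_self).2]

lemma not_isBounded_of_forall_add_smul_mem {E : Type*} [NormedAddCommGroup E] [NormedSpace ℝ E]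
    {S : Set E} {x d : E} (hd : d ≠ 0) (h : ∀ t : ℝ, 0 ≤ t → x + t • d ∈ S) :
    ¬ Bornology.IsBounded S := by
  intro hS
  obtain ⟨C, hC⟩ := hS.exists_norm_le
  have hd' : 0 < ‖d‖ := norm_pos_iff.2 hd
  set t := (C + ‖x‖ + 1) / ‖d‖
  have hx : ‖x‖ ≤ C := hC x (by simpa using h 0 le_rfl)
  have ht : 0 ≤ t := div_nonneg (by linarith [norm_nonneg x]) hd'.le
  have : t * ‖d‖ ≤ C + ‖x‖ := calc
    t * ‖d‖ = ‖(x + t • d) - x‖ := by simp [norm_smul, abs_of_nonneg ht]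
    _ ≤ ‖x + t • d‖ + ‖x‖ := norm_sub_le _ _
    _ ≤ C + ‖x‖ := by gcongr; exact hC _ (h t ht)
  rw [div_mul_cancel₀ _ hd'.ne'] at this
  linarith

section Feasible

variable {ι : Type*} [Fintype ι] (w : ι → ι → EReal)

def IsStrictPotential (x : ι → ℝ) : Prop :=
  ∀ u v, u ≠ v → w u v < ((x u - x v : ℝ) : EReal)

def feasibleSet : Set (ι → ℝ) :=
  {x | ∑ i, x i = 0 ∧ IsStrictPotential w x}

variable {w}

lemma feasibleSet_nonempty [Nonempty ι] {x : ι → ℝ} (hx : IsStrictPotential w x) :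
    (feasibleSet w).Nonempty := by
  refine ⟨fun i => x i - (∑ j, x j) / Fintype.card ι, ?_, fun u v huv => ?_⟩
  · rw [Finset.sum_sub_distrib, Finset.sum_const, Finset.card_univ, nsmul_eq_mul,
      mul_div_cancel₀ _ (Nat.cast_ne_zero.2 Fintype.card_ne_zero), sub_self]
  · simpa only [sub_sub_sub_cancel_right] using hx u v huv

lemma add_smul_mem_feasibleSet {x d : ι → ℝ} (hx : x ∈ feasibleSet w) (hd : ∑ i, d i = 0)
    (hmono : ∀ a b, w a b ≠ ⊥ → d b ≤ d a) {t : ℝ} (ht : 0 ≤ t) :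
    x + t • d ∈ feasibleSet w := by
  refine ⟨?_, fun u v huv => ?_⟩
  · simp [Finset.sum_add_distrib, ← Finset.mul_sum, hd, hx.1]
  · by_cases hb : w u v = ⊥
    · rw [hb]
      exact EReal.bot_lt_coe _
    · refine (hx.2 u v huv).trans_le (EReal.coe_le_coe_iff.2 ?_)
      have := mul_le_mul_of_nonneg_left (hmono u v hb) ht
      simp only [Pi.add_apply, Pi.smul_apply, smul_eq_mul]
      linarith

theorem reflTransGen_of_isBounded {x : ι → ℝ} (hx : x ∈ feasibleSet w)
    (hS : Bornology.IsBounded (feasibleSet w)) (u v : ι) :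
    Relation.ReflTransGen (fun a b => w a b ≠ ⊥) u v := by
  classical
  by_contra huv
  set R := fun a => Relation.ReflTransGen (fun a b => w a b ≠ ⊥) u a
  have hRu : R u := .refl
  set k : ℝ := ((Finset.univ.filter R).card : ℝ)
  set k' : ℝ := ((Finset.univ.filter fun a => ¬ R a).card : ℝ)
  have hk : 0 < k := Nat.cast_pos.2 (Finset.card_pos.2 ⟨u, by simp [hRu]⟩)
  have hk' : 0 ≤ k' := Nat.cast_nonneg _
  -- shifting the vertices not reachable from `u` upwards violates no constraint
  set d : ι → ℝ := fun a => if R a then -k' else k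
  refine not_isBounded_of_forall_add_smul_mem (x := x) (d := d) ?_ ?_ hS
  · intro hd
    have hdv : d v = k := if_neg huv
    exact hk.ne' (hdv.symm.trans (congrFun hd v))
  · refine fun t ht => add_smul_mem_feasibleSet hx ?_ (fun a b hab => ?_) ht
    · simp only [d, Finset.sum_ite, Finset.sum_const, nsmul_eq_mul]
      ring
    · show (if R b then -k' else k) ≤ (if R a then -k' else k)
      by_cases ha : R a
      · have hb : R b := ha.tail hab
        rw [if_pos ha, if_pos hb]
      · rw [if_neg ha]
        split_ifs <;> linarith

lemma exists_le_sub_of_reflTransGen {a b : ι}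
    (h : Relation.ReflTransGen (fun a b => w a b ≠ ⊥) a b) :
    ∃ C : ℝ, ∀ y ∈ feasibleSet w, C ≤ y a - y b := by
  induction h with
  | refl => exact ⟨0, fun y _ => by simp⟩
  | @tail b c _ hbc ih =>
    obtain ⟨C, hC⟩ := ih
    rcases eq_or_ne b c with rfl | hne
    · exact ⟨C, hC⟩
    refine ⟨C + (w b c).toReal, fun y hy => ?_⟩
    have hlt := hy.2 b c hne
    have hreal : (w b c).toReal < y b - y c := by
      rw [← EReal.coe_lt_coe_iff, EReal.coe_toReal hlt.ne_top hbc]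
      exact hlt
    linarith [hC y hy]

lemma isBounded_of_forall_le_sub {S : Set (ι → ℝ)} (hsum : ∀ y ∈ S, ∑ i, y i = 0)
    (hsub : ∀ a b, ∃ C : ℝ, ∀ y ∈ S, C ≤ y a - y b) : Bornology.IsBounded S := by
  choose C hC using hsub
  obtain ⟨K, hK⟩ := (Set.finite_range fun p : ι × ι => -C p.1 p.2).bddAbove
  have hCK : ∀ a b, -C a b ≤ K := fun a b => hK ⟨(a, b), rfl⟩
  refine (Metric.isBounded_Icc (fun _ => -K) fun _ => K).subset
    fun y hy => ⟨fun a => ?_, fun a => ?_⟩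
  -- a zero-sum vector has both a nonnegative and a nonpositive coordinate
  · obtain ⟨b, -, hb⟩ := Finset.exists_le_of_sum_le (f := 0) (g := y) ⟨a, Finset.mem_univ a⟩
      (by simp [hsum y hy])
    linarith [hC a b y hy, hCK a b, show (0 : ℝ) ≤ y b from hb]
  · obtain ⟨b, -, hb⟩ := Finset.exists_le_of_sum_le (f := y) (g := 0) ⟨a, Finset.mem_univ a⟩
      (by simp [hsum y hy])
    linarith [hC b a y hy, hCK b a, show y b ≤ 0 from hb]

theorem isBounded_feasibleSet
    (hconn : ∀ u v, Relation.ReflTransGen (fun a b => w a b ≠ ⊥) u v) :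
    Bornology.IsBounded (feasibleSet w) :=
  isBounded_of_forall_le_sub (fun _ hy => hy.1) fun a b => exists_le_sub_of_reflTransGen (hconn a b)

end Feasible

section Assoc

variable {n : ℕ}

theorem mAcyclicE_of_isStrictPotential {w : Fin n → Fin n → EReal} {x : Fin n → ℝ}
    (hx : IsStrictPotential w x) : MAcyclicE w := by
  rintro c ⟨h2, hnd, -⟩ hnonneg
  have hne : cyclePairs c ≠ [] := List.ne_nil_of_length_pos (by rw [length_cyclePairs]; omega)
  have hlt : cycWeightE w c < ((edgeSum (fun u v => x u - x v) (cyclePairs c) : ℝ) : EReal) :=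
    list_sum_map_lt_coe_sum hne fun p hp => hx _ _ (hnd.fst_ne_snd_of_mem_cyclePairs h2 hp)
  rw [edgeSum_sub_cyclePairs, EReal.coe_zero] at hlt
  exact hlt.not_ge hnonneg

theorem exists_isStrictPotential_of_mAcyclicE {w : Fin n → Fin n → EReal}
    (htop : ∀ u v, u ≠ v → w u v ≠ ⊤) (hac : MAcyclicE w) : ∃ x, IsStrictPotential w x := by
  obtain ⟨x, hx⟩ := exists_potential_of_cycle_neg (fun u v => w u v ≠ ⊥)
    (fun u v => (w u v).toReal) fun c hc => by
      -- `IsCycleE w` and `cycWeightE w` unfold to `IsSimpleCycle (w · · ≠ ⊥)` and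
      -- `edgeSum w ∘ cyclePairs`
      have hreal :
          cycWeightE w c = ((edgeSum (fun u v => (w u v).toReal) (cyclePairs c) : ℝ) : EReal) :=
        list_sum_map_eq_coe_sum fun p hp =>
          ⟨htop _ _ (hc.2.1.fst_ne_snd_of_mem_cyclePairs hc.1 hp), hc.2.2 p hp⟩
      have := hac c hc
      rw [hreal] at this
      exact_mod_cast not_le.1 this
  refine ⟨x, fun u v huv => ?_⟩
  by_cases hb : w u v = ⊥
  · rw [hb]
    exact EReal.bot_lt_coe _
  · rw [← EReal.coe_toReal (htop u v huv) hb]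
    exact_mod_cast hx u v huv hb

variable {m M : Fin n → Fin n → EReal}

lemma assocW_ne_top (hm : ∀ i j : Fin n, i < j → m i j ≠ ⊤) (hM : ∀ i j : Fin n, i < j → M i j ≠ ⊥)
    {u v : Fin n} (huv : u ≠ v) : assocW m M u v ≠ ⊤ := by
  unfold assocW
  split_ifs with h
  · exact hm u v h
  · exact EReal.neg_eq_top_iff.not.2 (hM v u ((not_lt.1 h).lt_of_ne huv.symm))

lemma isStrictPotential_assocW_iff {x : Fin n → ℝ} :
    IsStrictPotential (assocW m M) x ↔
      ∀ i j : Fin n, i < j →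
        m i j < ((x i - x j : ℝ) : EReal) ∧ ((x i - x j : ℝ) : EReal) < M i j := by
  have hswap : ∀ i j : Fin n, i < j →
      (assocW m M j i < ((x j - x i : ℝ) : EReal) ↔ ((x i - x j : ℝ) : EReal) < M i j) :=
    fun i j hij => by
      rw [assocW, if_neg hij.not_gt, EReal.neg_lt_comm, ← EReal.coe_neg, neg_sub]
  constructor
  · intro h i j hij
    exact ⟨by simpa [assocW, hij] using h i j hij.ne, (hswap i j hij).1 (h j i hij.ne')⟩
  · intro h u v huv
    rcases huv.lt_or_gt with hlt | hgt
    · simpa [assocW, hlt] using (h u v hlt).1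
    · exact (hswap v u hgt).2 (h v u hgt).2

end Assoc

theorem stmt1_general (n : ℕ) (hn : 1 ≤ n) (m M : Fin n → Fin n → EReal)
    (hm : ∀ i j : Fin n, i < j → m i j ≠ ⊤)
    (hM : ∀ i j : Fin n, i < j → M i j ≠ ⊥)
    (S : Set (Fin n → ℝ))
    (hS : S = {x : Fin n → ℝ | (∑ i, x i) = 0 ∧
      ∀ i j : Fin n, i < j →
        m i j < ((x i - x j : ℝ) : EReal) ∧ ((x i - x j : ℝ) : EReal) < M i j}) :
    (S.Nonempty ∧ Bornology.IsBounded S) ↔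
      (MAcyclicE (assocW m M) ∧
        ∀ u v : Fin n, Relation.ReflTransGen (fun a b => assocW m M a b ≠ ⊥) u v) := by
  have hS' : S = feasibleSet (assocW m M) := by
    simp only [hS, feasibleSet, isStrictPotential_assocW_iff]
  subst hS'
  constructor
  · rintro ⟨⟨x, hx⟩, hbdd⟩
    exact ⟨mAcyclicE_of_isStrictPotential hx.2, reflTransGen_of_isBounded hx hbdd⟩
  · rintro ⟨hac, hconn⟩
    have : Nonempty (Fin n) := ⟨⟨0, hn⟩⟩
    obtain ⟨x, hx⟩ := exists_isStrictPotential_of_mAcyclicE (fun _ _ => assocW_ne_top hm hM) hac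
    exact ⟨feasibleSet_nonempty hx, isBounded_feasibleSet hconn⟩

theorem stmt1 (n : ℕ) (hn : 1 ≤ n) (m M : Fin n → Fin n → EReal)
    (hm : ∀ i j : Fin n, i < j → m i j ≠ ⊤)
    (hM : ∀ i j : Fin n, i < j → M i j ≠ ⊥)
    (hlt : ∀ i j : Fin n, i < j → m i j < M i j)
    (S : Set (Fin n → ℝ))
    (hS : S = {x : Fin n → ℝ | (∑ i, x i) = 0 ∧
      ∀ i j : Fin n, i < j →
        m i j < ((x i - x j : ℝ) : EReal) ∧ ((x i - x j : ℝ) : EReal) < M i j}) :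
    (S.Nonempty ∧ Bornology.IsBounded S) ↔
      (MAcyclicE (assocW m M) ∧
        ∀ u v : Fin n, Relation.ReflTransGen (fun a b => assocW m M a b ≠ ⊥) u v) :=
  stmt1_general n hn m M hm hM S hS
end

section
/- Let T be a tournament on {1,…,n}, i.e., for each pair i < j exactly one of the directed edges i→j, j→i belongs to T. The set of points x ∈ ℝⁿ with x₁ + ⋯ + x_n = 0 satisfying x_i − x_j > 1 for every edge i→j of T with i < j and x_i − x_j < 1 for every edge j→i of T with i < j (this set is a region of the Linial arrangement when nonempty) is nonempty and bounded if and only if T is semiacyclic and strongly connected. -/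
/-- `c` is a directed cycle of the digraph `T`. -/
def IsCycleT {n : ℕ} (T : Fin n → Fin n → Prop) (c : List (Fin n)) : Prop :=
  2 ≤ c.length ∧ c.Nodup ∧ ∀ p ∈ cpairs c, T p.1 p.2

/-- A tournament is semiacyclic if every directed cycle contains strictly
fewer ascents (edges `u → v` with `u < v`) than descents (edges `u → v` with
`u > v`). -/
def Semiacyclic {n : ℕ} (T : Fin n → Fin n → Prop) : Prop :=
  ∀ c : List (Fin n), IsCycleT T c →
    (cpairs c).countP (fun p => decide (p.1 < p.2)) <
      (cpairs c).countP (fun p => decide (p.2 < p.1))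

/-!
The defining inequalities say `ascentSign u v < x u - x v` along every edge `u → v`, with
`ascentSign u v = ±1` according as the edge is an ascent or a descent: a system of strict
difference constraints. Around a cycle the differences `x u - x v` sum to zero, so a solution
forces every cycle to have negative `ascentSign`-weight, which is semiacyclicity. Conversely, if
every cycle is negative, then for small `ε > 0` no cycle is negative for the weights
`-ascentSign - ε`, and least path weights for them are potentials solving the system.

If every vertex reaches every other, then `x v - x u` is bounded along paths, which together with
`∑ x = 0` bounds the region. If `v` is not reachable from `u`, no edge leaves the set `A` of
vertices reachable from `u`; lowering the coordinates in `A` and raising the others keeps every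
constraint, so the region contains a ray.
-/

open Finset Filter Topology

section LinialRegion

variable {n : ℕ}

def pathWeight (ℓ : Fin n → Fin n → ℝ) : List (Fin n) → ℝ
  | a :: b :: l => ℓ a b + pathWeight ℓ (b :: l)
  | _ => 0

def cycleWeight (ℓ : Fin n → Fin n → ℝ) (c : List (Fin n)) : ℝ :=
  ((cpairs c).map fun p => ℓ p.1 p.2).sum

section Weights

variable (ℓ : Fin n → Fin n → ℝ)

@[simp] lemma pathWeight_singleton (a : Fin n) : pathWeight ℓ [a] = 0 := rfl
@[simp] lemma pathWeight_cons_cons (a b : Fin n) (l : List (Fin n)) :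
    pathWeight ℓ (a :: b :: l) = ℓ a b + pathWeight ℓ (b :: l) := rfl

lemma pathWeight_append_cons (s : List (Fin n)) (b : Fin n) (l : List (Fin n)) :
    pathWeight ℓ (s ++ b :: l) = pathWeight ℓ (s ++ [b]) + pathWeight ℓ (b :: l) := by
  induction s with
  | nil => simp
  | cons a s ih =>
    cases s with
    | nil => simp
    | cons c s => simp only [List.cons_append] at ih ⊢; simp [ih, add_assoc]

lemma cycleWeight_cons (a : Fin n) (l : List (Fin n)) :
    cycleWeight ℓ (a :: l) = pathWeight ℓ (a :: l ++ [a]) := by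
  suffices ∀ b, (((a :: l).zip (l ++ [b])).map fun p => ℓ p.1 p.2).sum =
      pathWeight ℓ (a :: l ++ [b]) by
    simpa [cycleWeight, cpairs, List.rotate_cons_succ] using this a
  induction l generalizing a with
  | nil => simp
  | cons c l ih => intro b; simp [ih]

lemma pathWeight_sub (x : Fin n → ℝ) (a b : Fin n) (l : List (Fin n)) :
    pathWeight (fun u v => x u - x v) (a :: l ++ [b]) = x a - x b := by
  induction l generalizing a with
  | nil => simp
  | cons c l ih => simp only [List.cons_append, pathWeight_cons_cons] at ih ⊢; rw [ih]; ring

lemma cycleWeight_sub (x : Fin n → ℝ) (c : List (Fin n)) :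
    cycleWeight (fun u v => x u - x v) c = 0 := by
  cases c with
  | nil => simp [cycleWeight, cpairs]
  | cons a l => rw [cycleWeight_cons, pathWeight_sub, sub_self]

lemma cycleWeight_neg_sub_const (w : Fin n → Fin n → ℝ) (ε : ℝ) (c : List (Fin n)) :
    cycleWeight (fun u v => -w u v - ε) c = -cycleWeight w c - ε * (cpairs c).length := by
  unfold cycleWeight
  induction cpairs c with
  | nil => simp
  | cons p L ih => simp only [List.map_cons, List.sum_cons, ih, List.length_cons]; push_cast; ring

end Weights

lemma isCycleT_cons_iff {R : Fin n → Fin n → Prop} {a : Fin n} {l : List (Fin n)} :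
    IsCycleT R (a :: l) ↔ l ≠ [] ∧ (a :: l).Nodup ∧ (a :: l ++ [a]).IsChain R := by
  rw [List.isChain_cons_append_singleton_iff_forall₂, List.forall₂_iff_zip]
  simp [IsCycleT, cpairs, List.rotate_cons_succ, Nat.one_le_iff_ne_zero]

lemma IsCycleT.fst_ne_snd {R : Fin n → Fin n → Prop} {c : List (Fin n)} (hc : IsCycleT R c)
    {p : Fin n × Fin n} (hp : p ∈ cpairs c) : p.1 ≠ p.2 := by
  obtain ⟨hlen, hnd, -⟩ := hc
  obtain ⟨i, hi, rfl⟩ := List.mem_iff_getElem.1 hp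
  simp only [cpairs, List.getElem_zip, List.getElem_rotate, List.length_zip, List.length_rotate,
    min_self] at hi ⊢
  rw [Ne, hnd.getElem_inj_iff]
  rcases Nat.lt_or_ge (i + 1) c.length with h | h
  · rw [Nat.mod_eq_of_lt h]; omega
  · rw [show i + 1 = c.length by omega, Nat.mod_self]; omega

lemma setOf_isCycleT_finite (R : Fin n → Fin n → Prop) : {c | IsCycleT R c}.Finite :=
  (List.finite_length_le (Fin n) n).subset fun c hc => by
    simpa using hc.2.1.length_le_card

lemma isCycleT_of_isChain_append {R : Fin n → Fin n → Prop} {s t : List (Fin n)} {u v : Fin n}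
    (hnd : (s ++ v :: (t ++ [u])).Nodup) (hch : (s ++ v :: (t ++ [u])).IsChain R)
    (huv : R u v) : IsCycleT R (v :: (t ++ [u])) := by
  refine isCycleT_cons_iff.2 ⟨by simp, hnd.sublist (List.sublist_append_right _ _), ?_⟩
  rw [← List.cons_append, List.append_assoc, List.singleton_append, List.isChain_split]
  exact ⟨(List.isChain_split.1 hch).2, List.isChain_pair.2 huv⟩

lemma exists_potential {R : Fin n → Fin n → Prop} {ℓ : Fin n → Fin n → ℝ}
    (hcyc : ∀ c, IsCycleT R c → 0 ≤ cycleWeight ℓ c) :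
    ∃ y : Fin n → ℝ, ∀ u v, R u v → u ≠ v → y v ≤ y u + ℓ u v := by
  -- `y v` is the least weight of a simple path `s ++ [v]` ending at `v`
  let P : Fin n → Set (List (Fin n)) := fun v => {s | (s ++ [v]).Nodup ∧ (s ++ [v]).IsChain R}
  have hfin : ∀ v, (P v).Finite := fun v =>
    (List.finite_length_le (Fin n) n).subset fun s hs => by
      have := hs.1.length_le_card
      simp only [List.length_append, List.length_singleton, Fintype.card_fin] at this
      exact (Nat.le_succ _).trans this
  choose s hsP hsmin using fun v =>
    Set.exists_min_image (P v) (fun s => pathWeight ℓ (s ++ [v])) (hfin v) ⟨[], by simp [P]⟩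
  refine ⟨fun v => pathWeight ℓ (s v ++ [v]), fun u v huv hne => ?_⟩
  obtain ⟨hnd, hch⟩ := hsP u
  dsimp only
  by_cases hv : v ∈ s u
  · -- cut the path to `u` at `v`; the cut-off part closes up with `u → v` to a cycle
    obtain ⟨s₁, t, hst⟩ := List.append_of_mem hv
    rw [hst, List.append_assoc, List.cons_append] at hnd hch
    have hmem : s₁ ∈ P v := ⟨hnd.sublist (by simp), hch.infix ⟨[], t ++ [u], by simp⟩⟩
    have hcycle := hcyc _ (isCycleT_of_isChain_append hnd hch huv)
    rw [cycleWeight_cons, ← List.cons_append, List.append_assoc, List.singleton_append,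
      pathWeight_append_cons, pathWeight_cons_cons, pathWeight_singleton, add_zero,
      List.cons_append] at hcycle
    calc pathWeight ℓ (s v ++ [v]) ≤ pathWeight ℓ (s₁ ++ [v]) := hsmin v s₁ hmem
      _ = pathWeight ℓ (s u ++ [u]) - pathWeight ℓ (v :: (t ++ [u])) := by
        rw [hst, List.append_assoc, List.cons_append,
          pathWeight_append_cons ℓ s₁ v (t ++ [u]), add_sub_cancel_right]
      _ ≤ pathWeight ℓ (s u ++ [u]) + ℓ u v := by linarith
  · have hmem : s u ++ [u] ∈ P v := by
      rw [Set.mem_ofPred_eq, List.append_assoc, List.singleton_append, List.isChain_split,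
        ← List.singleton_append, ← List.append_assoc, ← List.concat_eq_append]
      exact ⟨hnd.concat (by simpa [hne.symm] using hv), hch, List.isChain_pair.2 huv⟩
    calc pathWeight ℓ (s v ++ [v]) ≤ pathWeight ℓ (s u ++ [u] ++ [v]) := hsmin v _ hmem
      _ = pathWeight ℓ (s u ++ [u]) + ℓ u v := by
        rw [List.append_assoc, List.singleton_append, pathWeight_append_cons]; simp

lemma cycleWeight_neg_of_lt_sub {R : Fin n → Fin n → Prop} {w : Fin n → Fin n → ℝ}
    {x : Fin n → ℝ} (hx : ∀ u v, R u v → u ≠ v → w u v < x u - x v)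
    {c : List (Fin n)} (hc : IsCycleT R c) : cycleWeight w c < 0 := by
  rw [← cycleWeight_sub x c]
  refine List.sum_lt_sum_of_ne_nil ?_ _ _ fun p hp => hx _ _ (hc.2.2 p hp) (hc.fst_ne_snd hp)
  rw [← List.length_pos_iff, cpairs, List.length_zip, List.length_rotate, min_self]
  exact lt_of_lt_of_le two_pos hc.1

lemma exists_pos_forall_cycleWeight_add_le {R : Fin n → Fin n → Prop}
    {w : Fin n → Fin n → ℝ} (hcyc : ∀ c, IsCycleT R c → cycleWeight w c < 0) :
    ∃ ε > 0, ∀ c, IsCycleT R c → cycleWeight w c + ε * (cpairs c).length ≤ 0 := by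
  have hev : ∀ᶠ ε in 𝓝[>] (0 : ℝ), ∀ c ∈ {c | IsCycleT R c},
      cycleWeight w c + ε * (cpairs c).length < 0 := by
    refine nhdsWithin_le_nhds ((setOf_isCycleT_finite R).eventually_all.2 fun c hc => ?_)
    have hcont : Continuous fun ε : ℝ => cycleWeight w c + ε * (cpairs c).length := by fun_prop
    exact hcont.continuousAt.eventually_lt continuousAt_const (by simpa using hcyc c hc)
  obtain ⟨ε, hε, hεpos⟩ := (hev.and self_mem_nhdsWithin).exists
  exact ⟨ε, hεpos, fun c hc => (hε c hc).le⟩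

lemma exists_lt_sub_of_cycleWeight_neg {R : Fin n → Fin n → Prop} {w : Fin n → Fin n → ℝ}
    (hcyc : ∀ c, IsCycleT R c → cycleWeight w c < 0) :
    ∃ x : Fin n → ℝ, ∀ u v, R u v → u ≠ v → w u v < x u - x v := by
  obtain ⟨ε, hεpos, hε⟩ := exists_pos_forall_cycleWeight_add_le hcyc
  obtain ⟨y, hy⟩ := exists_potential (ℓ := fun u v => -w u v - ε) fun c hc => by
    linarith [cycleWeight_neg_sub_const w ε c, hε c hc]
  exact ⟨y, fun u v huv hne => by linarith [hy u v huv hne]⟩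

def edgeRegion (R : Fin n → Fin n → Prop) (w : Fin n → Fin n → ℝ) : Set (Fin n → ℝ) :=
  {x | ∑ i, x i = 0 ∧ ∀ u v, R u v → u ≠ v → w u v < x u - x v}

lemma edgeRegion_nonempty_iff {R : Fin n → Fin n → Prop} {w : Fin n → Fin n → ℝ} :
    (edgeRegion R w).Nonempty ↔ ∀ c, IsCycleT R c → cycleWeight w c < 0 := by
  refine ⟨fun ⟨x, _, hx⟩ _ => cycleWeight_neg_of_lt_sub hx, fun hcyc => ?_⟩
  obtain ⟨y, hy⟩ := exists_lt_sub_of_cycleWeight_neg hcyc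
  refine ⟨fun i => y i - (∑ j, y j) / n, ?_, fun u v huv hne => by simpa using hy u v huv hne⟩
  rcases Nat.eq_zero_or_pos n with rfl | hn
  · simp
  · simp [Finset.sum_sub_distrib, mul_div_cancel₀ _ (by positivity : (n : ℝ) ≠ 0)]

lemma exists_le_add_mul_of_reflTransGen {α : Type*} {R : α → α → Prop} {C : ℝ} {u v : α}
    (h : Relation.ReflTransGen R u v) :
    ∃ k : ℕ, ∀ x : α → ℝ, (∀ a b, R a b → x b ≤ x a + C) →
      x v ≤ x u + k * C := by
  induction h with
  | refl => exact ⟨0, fun x _ => by simp⟩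
  | tail _ hbc ih =>
    obtain ⟨k, hk⟩ := ih
    exact ⟨k + 1, fun x hx => by push_cast; linarith [hk x hx, hx _ _ hbc]⟩

lemma abs_le_of_sum_eq_zero {ι : Type*} [Fintype ι] {x : ι → ℝ} {B : ℝ}
    (h0 : ∑ i, x i = 0) (hB : ∀ i j, x i - x j ≤ B) (i : ι) : |x i| ≤ B := by
  have hcard : (0 : ℝ) < Fintype.card ι := Nat.cast_pos.2 (Fintype.card_pos_iff.2 ⟨i⟩)
  have hup : ∑ j, (x i - x j) ≤ ∑ _j : ι, B := Finset.sum_le_sum fun j _ => hB i j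
  have hdown : ∑ j, (x j - x i) ≤ ∑ _j : ι, B := Finset.sum_le_sum fun j _ => hB j i
  simp only [Finset.sum_sub_distrib, h0, Finset.sum_const, Finset.card_univ, nsmul_eq_mul]
    at hup hdown
  rw [abs_le]
  constructor <;> nlinarith

lemma isBounded_edgeRegion {R : Fin n → Fin n → Prop} {w : Fin n → Fin n → ℝ} {C : ℝ}
    (hR : ∀ u v, Relation.ReflTransGen R u v) (hC : 0 ≤ C) (hw : ∀ u v, -C ≤ w u v) :
    Bornology.IsBounded (edgeRegion R w) := by
  choose k hk using fun u v => exists_le_add_mul_of_reflTransGen (C := C) (hR u v)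
  obtain ⟨B, hB⟩ := Finite.exists_le fun p : Fin n × Fin n => (k p.1 p.2 : ℝ) * C
  refine Bornology.forall_isBounded_image_eval_iff.1 fun i =>
    (Metric.isBounded_Icc (-B) B).subset ?_
  rintro _ ⟨x, ⟨hx0, hx⟩, rfl⟩
  have hstep : ∀ a b, R a b → x b ≤ x a + C := fun a b hab => by
    rcases eq_or_ne a b with rfl | hne
    · linarith
    · linarith [hx a b hab hne, hw a b]
  exact abs_le.1 <| abs_le_of_sum_eq_zero hx0 (fun a b => by linarith [hk b a x hstep, hB (b, a)]) i

def cutVector (A : Finset (Fin n)) : Fin n → ℝ :=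
  fun i => if i ∈ A then -(#Aᶜ : ℝ) else #A

lemma sum_cutVector (A : Finset (Fin n)) : ∑ i, cutVector A i = 0 := by
  simp [cutVector, Finset.sum_ite, Finset.filter_not, Finset.compl_eq_univ_sdiff]
  ring

lemma cutVector_le_of_imp {A : Finset (Fin n)} {a b : Fin n} (h : a ∈ A → b ∈ A) :
    cutVector A b ≤ cutVector A a := by
  unfold cutVector
  have : (0 : ℝ) ≤ #A + #Aᶜ := by positivity
  split_ifs <;> first | tauto | linarith

lemma add_smul_cutVector_mem_edgeRegion {R : Fin n → Fin n → Prop} {w : Fin n → Fin n → ℝ}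
    {x : Fin n → ℝ} (hx : x ∈ edgeRegion R w) {A : Finset (Fin n)}
    (hA : ∀ a b, R a b → a ∈ A → b ∈ A) {t : ℝ} (ht : 0 ≤ t) :
    x + t • cutVector A ∈ edgeRegion R w := by
  refine ⟨by simp [Finset.sum_add_distrib, ← Finset.mul_sum, sum_cutVector, hx.1],
    fun a b hab hne => ?_⟩
  have := mul_le_mul_of_nonneg_left (cutVector_le_of_imp (hA a b hab)) ht
  simp only [Pi.add_apply, Pi.smul_apply, smul_eq_mul]
  linarith [hx.2 a b hab hne]

lemma not_isBounded_edgeRegion {R : Fin n → Fin n → Prop} {w : Fin n → Fin n → ℝ}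
    (hne : (edgeRegion R w).Nonempty) {u v : Fin n} (huv : ¬ Relation.ReflTransGen R u v) :
    ¬ Bornology.IsBounded (edgeRegion R w) := by
  classical
  obtain ⟨x, hx⟩ := hne
  set A := univ.filter (Relation.ReflTransGen R u)
  have hA : ∀ a b, R a b → a ∈ A → b ∈ A := by
    simpa [A] using fun a b hab ha => ha.tail hab
  have hu : cutVector A u ≤ -1 := by
    have huA : u ∈ A := by simpa [A] using Relation.ReflTransGen.refl
    have : 0 < #Aᶜ := Finset.card_pos.2 ⟨v, by simpa [A] using huv⟩
    simp only [cutVector, if_pos huA, neg_le_neg_iff, Nat.one_le_cast]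
    exact this
  intro hbdd
  obtain ⟨m, hm⟩ := (Bornology.forall_isBounded_image_eval_iff.2 hbdd u).bddBelow
  have ht : 0 ≤ |x u - m| + 1 := by positivity
  have := hm ⟨_, add_smul_cutVector_mem_edgeRegion hx hA ht, rfl⟩
  simp only [Function.eval, Pi.add_apply, Pi.smul_apply, smul_eq_mul] at this
  nlinarith [le_abs_self (x u - m), abs_nonneg (x u - m)]

def ascentSign (u v : Fin n) : ℝ := if u < v then 1 else if v < u then -1 else 0

lemma neg_one_le_ascentSign (u v : Fin n) : -1 ≤ ascentSign u v := by
  unfold ascentSign; split_ifs <;> norm_num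

lemma cycleWeight_ascentSign (c : List (Fin n)) :
    cycleWeight ascentSign c = ((cpairs c).countP fun p => decide (p.1 < p.2)) -
      ((cpairs c).countP fun p => decide (p.2 < p.1)) := by
  unfold cycleWeight
  induction cpairs c with
  | nil => simp
  | cons p L ih =>
    simp only [List.map_cons, List.sum_cons, ih, List.countP_cons]
    rcases lt_trichotomy p.1 p.2 with h | h | h
    · simp [ascentSign, h, h.not_gt]; ring
    · simp [ascentSign, h]
    · simp [ascentSign, h, h.not_gt]; ring

lemma semiacyclic_iff_cycleWeight_neg {T : Fin n → Fin n → Prop} :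
    Semiacyclic T ↔ ∀ c, IsCycleT T c → cycleWeight ascentSign c < 0 := by
  simp only [Semiacyclic, cycleWeight_ascentSign, sub_neg, Nat.cast_lt]

lemma linial_constraints_iff (T : Fin n → Fin n → Prop) (x : Fin n → ℝ) :
    (∀ i j : Fin n, i < j → (T i j → 1 < x i - x j) ∧ (T j i → x i - x j < 1)) ↔
      ∀ u v, T u v → u ≠ v → ascentSign u v < x u - x v := by
  constructor
  · intro h u v huv hne
    rcases hne.lt_or_gt with hlt | hlt
    · simpa [ascentSign, hlt] using (h u v hlt).1 huv
    · have := (h v u hlt).2 huv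
      simp only [ascentSign, hlt.not_gt, hlt, if_true, if_false]
      linarith
  · intro h i j hij
    refine ⟨fun hT => by simpa [ascentSign, hij] using h i j hT hij.ne, fun hT => ?_⟩
    have := h j i hT hij.ne'
    simp only [ascentSign, hij.not_gt, hij, if_true, if_false] at this
    linarith

end LinialRegion

theorem stmt2_general (n : ℕ) (T : Fin n → Fin n → Prop)
    (S : Set (Fin n → ℝ))
    (hS : S = {x : Fin n → ℝ | (∑ i, x i) = 0 ∧
      ∀ i j : Fin n, i < j → (T i j → 1 < x i - x j) ∧ (T j i → x i - x j < 1)}) :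
    (S.Nonempty ∧ Bornology.IsBounded S) ↔
      (Semiacyclic T ∧ ∀ u v : Fin n, Relation.ReflTransGen T u v) := by
  obtain rfl : S = edgeRegion T ascentSign := by
    simp only [hS, edgeRegion, linial_constraints_iff]
  constructor
  · rintro ⟨hne, hbdd⟩
    exact ⟨semiacyclic_iff_cycleWeight_neg.2 (edgeRegion_nonempty_iff.1 hne),
      fun u v => by_contra fun huv => not_isBounded_edgeRegion hne huv hbdd⟩
  · rintro ⟨hsemi, hconn⟩
    exact ⟨edgeRegion_nonempty_iff.2 (semiacyclic_iff_cycleWeight_neg.1 hsemi),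
      isBounded_edgeRegion hconn zero_le_one neg_one_le_ascentSign⟩

theorem stmt2 (n : ℕ) (T : Fin n → Fin n → Prop)
    (hT : ∀ i j : Fin n, i ≠ j → (T i j ↔ ¬ T j i)) (hTirr : ∀ i : Fin n, ¬ T i i)
    (S : Set (Fin n → ℝ))
    (hS : S = {x : Fin n → ℝ | (∑ i, x i) = 0 ∧
      ∀ i j : Fin n, i < j → (T i j → 1 < x i - x j) ∧ (T j i → x i - x j < 1)}) :
    (S.Nonempty ∧ Bornology.IsBounded S) ↔
      (Semiacyclic T ∧ ∀ u v : Fin n, Relation.ReflTransGen T u v) :=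
  stmt2_general n T S hS
end
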